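/- arXiv:1406.2626 — 3 statements merged into one kernel-verified Lean document; each statement's English description precedes it below -/
import Mathlib

section
/- Let L > 0, m ∈ ℕ, and let g : AddCircle L → ℂ be continuously differentiable with ĝ(k) = 0 for every integer k with |k| ≤ m. Then ‖g‖ ≤ (L/(2π(m+1))) ‖g_x‖. -/
/-!
By Parseval, `‖g‖²` and `‖g'‖²` are `L` times the sums of the squared moduli of the Fourier
coefficients of `g` and `g'`. Integration by parts over one period (no boundary term, by
periodicity) gives `ĝ'(k) = (2πik/L) ĝ(k)`, so on the modes `|k| ≥ m + 1`, the only ones that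
survive, `|ĝ(k)| ≤ (L/(2π(m+1))) |ĝ'(k)|` termwise.
-/

open MeasureTheory Finset

/-- The `L²` norm `(∫₀^L ‖g x‖² dx)^{1/2}` of a function on the circle `AddCircle L`
(recall that the standard measure on `AddCircle L` has total mass `L`). -/
noncomputable def l2norm (L : ℝ) [Fact (0 < L)] (g : AddCircle L → ℂ) : ℝ :=
  Real.sqrt (∫ x : AddCircle L, ‖g x‖ ^ 2)

/-- The trigonometric polynomial `x ↦ ∑_{|k| ≤ N} c k · e^{2πikx/L}` on `AddCircle L`. -/
noncomputable def trigSum (L : ℝ) (N : ℕ) (c : ℤ → ℂ) : AddCircle L → ℂ :=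
  fun x => ∑ k ∈ Finset.Icc (-(N : ℤ)) (N : ℤ), c k * fourier k x

/-- The low-mode Fourier projection `P_N g = ∑_{|k| ≤ N} ĝ(k) e^{2πikx/L}`. -/
noncomputable def lowProj (L : ℝ) [Fact (0 < L)] (N : ℕ) (g : AddCircle L → ℂ) :
    AddCircle L → ℂ :=
  trigSum L N (fun k => fourierCoeff g k)

open AddCircle Complex

theorem AddCircle.liftIoc_comp_coe {𝕜 B : Type*} [AddCommGroup 𝕜] [LinearOrder 𝕜]
    [IsOrderedAddMonoid 𝕜] [Archimedean 𝕜] {p : 𝕜} [Fact (0 < p)] (a : 𝕜)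
    (f : AddCircle p → B) : liftIoc p a (fun t : 𝕜 => f t) = f :=
  funext fun x => congrArg f ((equivIoc p a).symm_apply_apply x)

variable {T : ℝ} [hT : Fact (0 < T)]

theorem fourierCoeff_of_hasDerivAt {f f' : AddCircle T → ℂ}
    (hf : ∀ t : ℝ, HasDerivAt (fun τ : ℝ => f τ) (f' t) t)
    (hf' : IntervalIntegrable (fun t : ℝ => f' t) volume 0 T) {n : ℤ} (hn : n ≠ 0) :
    fourierCoeff f' n = 2 * Real.pi * I * n / T * fourierCoeff f n := by
  have hab : (0 : ℝ) < 0 + T := lt_add_of_pos_right 0 hT.out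
  have key := fourierCoeffOn_of_hasDerivAt hab hn (fun x _ => hf x) (by simpa using hf')
  rw [← liftIoc_comp_coe 0 f, ← liftIoc_comp_coe 0 f', fourierCoeff_liftIoc_eq,
    fourierCoeff_liftIoc_eq, key, coe_add_period, sub_self, mul_zero, zero_sub]
  have : (2 * Real.pi * I * n : ℂ) ≠ 0 := by simp [Real.pi_ne_zero, hn, I_ne_zero]
  have : (T : ℂ) ≠ 0 := by exact_mod_cast hT.out.ne'
  field_simp
  push_cast
  ring

theorem norm_fourierCoeff_of_hasDerivAt {f f' : AddCircle T → ℂ}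
    (hf : ∀ t : ℝ, HasDerivAt (fun τ : ℝ => f τ) (f' t) t)
    (hf' : IntervalIntegrable (fun t : ℝ => f' t) volume 0 T) {n : ℤ} (hn : n ≠ 0) :
    ‖fourierCoeff f' n‖ = 2 * Real.pi * |(n : ℝ)| / T * ‖fourierCoeff f n‖ := by
  rw [fourierCoeff_of_hasDerivAt hf hf' hn, norm_mul]
  simp [abs_of_pos Real.pi_pos, abs_of_pos hT.out]

theorem hasSum_sq_fourierCoeff_of_memLp {f : AddCircle T → ℂ} (hf : MemLp f 2 haarAddCircle) :
    HasSum (fun n : ℤ => ‖fourierCoeff f n‖ ^ 2) (∫ t, ‖f t‖ ^ 2 ∂haarAddCircle) := by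
  rw [fourierCoeff_congr_ae hf.coeFn_toLp.symm]
  convert hasSum_sq_fourierCoeff hf.toLp using 1
  exact integral_congr_ae (hf.coeFn_toLp.mono fun x hx => by simp only [hx])

theorem l2norm_eq_sqrt_tsum {f : AddCircle T → ℂ} (hf : MemLp f 2 haarAddCircle) :
    l2norm T f = Real.sqrt (T * ∑' n : ℤ, ‖fourierCoeff f n‖ ^ 2) := by
  rw [l2norm, (hasSum_sq_fourierCoeff_of_memLp hf).tsum_eq, volume_eq_smul_haarAddCircle,
    integral_smul_measure, ENNReal.toReal_ofReal hT.out.le, smul_eq_mul]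

theorem l2norm_le_of_norm_fourierCoeff_le {f h : AddCircle T → ℂ} (hf : MemLp f 2 haarAddCircle)
    (hh : MemLp h 2 haarAddCircle) {C : ℝ} (hC : 0 ≤ C)
    (hfh : ∀ n, ‖fourierCoeff f n‖ ≤ C * ‖fourierCoeff h n‖) : l2norm T f ≤ C * l2norm T h := by
  have hsq : ∀ n, ‖fourierCoeff f n‖ ^ 2 ≤ C ^ 2 * ‖fourierCoeff h n‖ ^ 2 := fun n => by
    rw [← mul_pow]; exact pow_le_pow_left₀ (norm_nonneg _) (hfh n) 2
  have hsum : ∑' n, ‖fourierCoeff f n‖ ^ 2 ≤ C ^ 2 * ∑' n, ‖fourierCoeff h n‖ ^ 2 := by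
    rw [← tsum_mul_left]
    exact (hasSum_sq_fourierCoeff_of_memLp hf).summable.tsum_le_tsum hsq
      ((hasSum_sq_fourierCoeff_of_memLp hh).summable.mul_left _)
  rw [l2norm_eq_sqrt_tsum hf, l2norm_eq_sqrt_tsum hh, ← Real.sqrt_sq hC,
    ← Real.sqrt_mul (sq_nonneg C), mul_left_comm]
  gcongr
  exact hT.out.le

/-- high-mode Poincaré inequality: if `g : AddCircle L → ℂ` is continuously
differentiable with vanishing Fourier coefficients `ĝ(k) = 0` for all `|k| ≤ m`, then
`‖g‖ ≤ (L / (2π(m+1))) ‖g_x‖`. -/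
theorem highModes_poincare (L : ℝ) [Fact (0 < L)] (m : ℕ) (g g' : AddCircle L → ℂ)
    (hderiv : ∀ t : ℝ, HasDerivAt (fun τ : ℝ => g (τ : AddCircle L)) (g' (t : AddCircle L)) t)
    (hcont : Continuous g')
    (hlow : ∀ k : ℤ, |k| ≤ (m : ℤ) → fourierCoeff g k = 0) :
    l2norm L g ≤ L / (2 * Real.pi * ((m : ℝ) + 1)) * l2norm L g' := by
  have hL : (0 : ℝ) < L := Fact.out
  have hg : Continuous g := (QuotientAddGroup.isQuotientMap_mk _).continuous_iff.2
    (continuous_iff_continuousAt.2 fun t => (hderiv t).continuousAt)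
  have memLp {f : AddCircle L → ℂ} (hf : Continuous f) : MemLp f 2 haarAddCircle :=
    hf.memLp_of_hasCompactSupport (HasCompactSupport.of_compactSpace f)
  refine l2norm_le_of_norm_fourierCoeff_le (memLp hg) (memLp hcont) (by positivity) fun n => ?_
  rcases le_or_gt |n| (m : ℤ) with hn | hn
  · rw [hlow n hn, norm_zero]
    positivity
  have hn0 : n ≠ 0 := by rintro rfl; rw [abs_zero] at hn; omega
  have hm : (m : ℝ) + 1 ≤ |(n : ℝ)| := by exact_mod_cast hn
  rw [norm_fourierCoeff_of_hasDerivAt hderiv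
    ((hcont.comp (AddCircle.continuous_mk' L)).intervalIntegrable 0 L) hn0, ← mul_assoc]
  refine le_mul_of_one_le_left (norm_nonneg _) ?_
  rw [div_mul_div_comm, one_le_div (by positivity)]
  nlinarith [mul_le_mul_of_nonneg_left hm (by positivity : 0 ≤ 2 * Real.pi * L)]
end

section
/- There is a constant c > 0 depending only on L such that every continuously differentiable g : AddCircle L → ℂ satisfies ‖g‖_∞² ≤ c ‖g‖ ‖g‖_{H¹} (Agmon's inequality in one dimension). -/
/-!
The function `‖g‖²` has derivative `2 Re ⟪g, g'⟫`, so by Cauchy–Schwarz its oscillation over a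
period is at most `2 ‖g‖ ‖g'‖`, while its minimum is at most its mean `‖g‖² / L`. Hence
`‖g‖_∞² ≤ ‖g‖² / L + 2 ‖g‖ ‖g'‖ ≤ (2 + 1 / L) ‖g‖ ‖g‖_{H¹}`.
-/

open MeasureTheory Finset

open intervalIntegral

section RealLine

variable {E : Type*} [NormedAddCommGroup E] [NormedSpace ℝ E] {f f' : ℝ → E} {a b : ℝ}

theorem norm_sub_le_integral_norm_deriv [CompleteSpace E] (hab : a ≤ b)
    (hf : ∀ x ∈ Set.Icc a b, HasDerivAt f (f' x) x) (hf' : IntervalIntegrable f' volume a b)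
    {s t : ℝ} (hs : s ∈ Set.Icc a b) (ht : t ∈ Set.Icc a b) :
    ‖f t - f s‖ ≤ ∫ x in a..b, ‖f' x‖ := by
  have hst : Set.uIcc s t ⊆ Set.Icc a b := Set.uIcc_subset_Icc hs ht
  rw [← integral_eq_sub_of_hasDerivAt (fun x hx => hf x (hst hx))
    (hf'.mono_set (by rwa [Set.uIcc_of_le hab])), integral_of_le hab]
  refine norm_integral_le_integral_norm_uIoc.trans <|
    setIntegral_mono_set hf'.1.norm (Filter.Eventually.of_forall fun x => norm_nonneg _) ?_
  exact (Set.Ioc_subset_Ioc (le_min hs.1 ht.1) (max_le hs.2 ht.2)).eventuallyLE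

theorem norm_le_average_add_integral_norm_deriv [CompleteSpace E] (hab : a < b)
    (hf : ∀ x ∈ Set.Icc a b, HasDerivAt f (f' x) x) (hf' : IntervalIntegrable f' volume a b)
    {t : ℝ} (ht : t ∈ Set.Icc a b) :
    ‖f t‖ ≤ (b - a)⁻¹ * (∫ x in a..b, ‖f x‖) + ∫ x in a..b, ‖f' x‖ := by
  have hfi : IntervalIntegrable (fun x => ‖f x‖) volume a b :=
    ContinuousOn.intervalIntegrable (by
      rw [Set.uIcc_of_le hab.le]
      exact fun x hx => (hf x hx).continuousAt.continuousWithinAt.norm)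
  obtain ⟨s, hs, hs_le⟩ := exists_le_setAverage (by simp [hab]) (by simp) hfi.1
  have hs_avg : ⨍ x in Set.Ioc a b, ‖f x‖ = (b - a)⁻¹ * ∫ x in a..b, ‖f x‖ := by
    rw [setAverage_eq, integral_of_le hab.le, Real.volume_real_Ioc_of_le hab.le, smul_eq_mul]
  calc ‖f t‖ ≤ ‖f s‖ + ‖f t - f s‖ := norm_le_insert' _ _
    _ ≤ _ := add_le_add (hs_le.trans hs_avg.le)
      (norm_sub_le_integral_norm_deriv hab.le hf hf' (Set.Ioc_subset_Icc_self hs) ht)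

end RealLine

section Circle

variable {L : ℝ}

theorem continuous_of_hasDerivAt_coe {g g' : AddCircle L → ℂ}
    (hd : ∀ t : ℝ, HasDerivAt (fun τ : ℝ => g τ) (g' t) t) : Continuous g :=
  isQuotientMap_quotient_mk'.continuous_iff.mpr <|
    continuous_iff_continuousAt.mpr fun t => (hd t).continuousAt

variable [Fact (0 < L)]

theorem AddCircle.intervalIntegral_preimage_zero {E : Type*} [NormedAddCommGroup E]
    [NormedSpace ℝ E] (F : AddCircle L → E) : ∫ t in 0..L, F t = ∫ x, F x := by
  simpa using AddCircle.intervalIntegral_preimage L 0 F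

theorem l2norm_sq (g : AddCircle L → ℂ) : l2norm L g ^ 2 = ∫ x, ‖g x‖ ^ 2 :=
  Real.sq_sqrt (integral_nonneg fun _ => sq_nonneg _)

theorem integral_norm_mul_norm_le_l2norm_mul_l2norm {g h : AddCircle L → ℂ}
    (hg : MemLp g 2) (hh : MemLp h 2) :
    ∫ x, ‖g x‖ * ‖h x‖ ≤ l2norm L g * l2norm L h := by
  have := integral_mul_norm_le_Lp_mul_Lq Real.HolderConjugate.two_two
    (by simpa using hg) (by simpa using hh)
  simpa [l2norm, Real.sqrt_eq_rpow] using this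

theorem intervalIntegral_norm_two_mul_inner_le {g h : AddCircle L → ℂ}
    (hg : Continuous g) (hh : Continuous h) :
    ∫ t in 0..L, ‖2 * inner ℝ (g t) (h t)‖ ≤ 2 * (l2norm L g * l2norm L h) := by
  have hL : 0 < L := Fact.out
  calc ∫ t in 0..L, ‖2 * inner ℝ (g t) (h t)‖
      ≤ ∫ t in 0..L, 2 * (‖g t‖ * ‖h t‖) := by
        refine integral_mono_on hL.le ?_ ?_ fun t _ => ?_
        · exact (continuous_const.mul ((hg.comp continuous_quotient_mk').inner
            (hh.comp continuous_quotient_mk'))).norm.intervalIntegrable _ _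
        · exact (continuous_const.mul ((hg.comp continuous_quotient_mk').norm.mul
            (hh.comp continuous_quotient_mk').norm)).intervalIntegrable _ _
        · rw [norm_mul, Real.norm_two]
          exact mul_le_mul_of_nonneg_left (norm_inner_le_norm _ _) zero_le_two
    _ = 2 * ∫ x, ‖g x‖ * ‖h x‖ := by
        rw [intervalIntegral.integral_const_mul,
          AddCircle.intervalIntegral_preimage_zero fun x => ‖g x‖ * ‖h x‖]
    _ ≤ 2 * (l2norm L g * l2norm L h) := by
        gcongr
        exact integral_norm_mul_norm_le_l2norm_mul_l2norm
          (hg.memLp_of_hasCompactSupport (.of_compactSpace g))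
          (hh.memLp_of_hasCompactSupport (.of_compactSpace h))

theorem sq_norm_le_of_hasDerivAt {g g' : AddCircle L → ℂ}
    (hd : ∀ t : ℝ, HasDerivAt (fun τ : ℝ => g τ) (g' t) t) (hg' : Continuous g')
    (x : AddCircle L) :
    ‖g x‖ ^ 2 ≤ l2norm L g ^ 2 / L + 2 * (l2norm L g * l2norm L g') := by
  have hL : 0 < L := Fact.out
  have hg := continuous_of_hasDerivAt_coe hd
  have h_avg : L⁻¹ * ∫ t in 0..L, ‖‖g t‖ ^ 2‖ = l2norm L g ^ 2 / L := by
    simp_rw [norm_pow, norm_norm]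
    rw [l2norm_sq, AddCircle.intervalIntegral_preimage_zero fun x => ‖g x‖ ^ 2, inv_mul_eq_div]
  obtain ⟨t, ht, rfl⟩ := AddCircle.eq_coe_Ico x
  have := norm_le_average_add_integral_norm_deriv hL (fun t _ => (hd t).norm_sq)
    ((continuous_const.mul ((hg.comp continuous_quotient_mk').inner
      (hg'.comp continuous_quotient_mk'))).intervalIntegrable _ _)
    (Set.Ico_subset_Icc_self ht)
  rw [sub_zero, h_avg, norm_pow, norm_norm] at this
  linarith [intervalIntegral_norm_two_mul_inner_le hg hg']

end Circle

/-- Agmon's inequality in one dimension: there is `c > 0` depending only on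
`L` such that every continuously differentiable `g : AddCircle L → ℂ` satisfies
`‖g‖_∞² ≤ c ‖g‖ ‖g‖_{H¹}` where `‖g‖_{H¹}² = ‖g‖² + ‖g_x‖²`. -/
theorem agmon_inequality (L : ℝ) [Fact (0 < L)] :
    ∃ c : ℝ, 0 < c ∧ ∀ (g g' : AddCircle L → ℂ),
      (∀ t : ℝ, HasDerivAt (fun τ : ℝ => g (τ : AddCircle L)) (g' (t : AddCircle L)) t) →
      Continuous g' →
      (⨆ x : AddCircle L, ‖g x‖) ^ 2
        ≤ c * l2norm L g * Real.sqrt ((l2norm L g) ^ 2 + (l2norm L g') ^ 2) := by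
  have hL : 0 < L := Fact.out
  refine ⟨2 + 1 / L, by positivity, fun g g' hd hg' => ?_⟩
  set A := l2norm L g
  set B := l2norm L g'
  set H := Real.sqrt (A ^ 2 + B ^ 2)
  have hA : 0 ≤ A := Real.sqrt_nonneg _
  have hB : 0 ≤ B := Real.sqrt_nonneg _
  have hAH : A ≤ H := Real.le_sqrt_of_sq_le (le_add_of_nonneg_right (sq_nonneg B))
  have hBH : B ≤ H := Real.le_sqrt_of_sq_le (le_add_of_nonneg_left (sq_nonneg A))
  have hsup : (⨆ x, ‖g x‖) ≤ Real.sqrt (A ^ 2 / L + 2 * (A * B)) :=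
    Real.iSup_le (fun x => Real.le_sqrt_of_sq_le (sq_norm_le_of_hasDerivAt hd hg' x))
      (Real.sqrt_nonneg _)
  calc (⨆ x, ‖g x‖) ^ 2 ≤ A ^ 2 / L + 2 * (A * B) :=
        (pow_le_pow_left₀ (Real.iSup_nonneg fun x => norm_nonneg _) hsup 2).trans_eq
          (Real.sq_sqrt (add_nonneg (by positivity) (mul_nonneg zero_le_two (mul_nonneg hA hB))))
    _ = A * A / L + 2 * (A * B) := by ring
    _ ≤ A * H / L + 2 * (A * H) := by gcongr
    _ = (2 + 1 / L) * A * H := by ring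
end

section
/- Let w be a Galerkin solution. Then for every s ≥ −k₀, (1/2)(d/ds)‖w(s,·)‖² + γ‖w(s,·)‖² + μ‖P_m w(s,·)‖² = Im ∫₀^L f(x)·conj(w(s,x)) dx + μ Re ∫₀^L v(s)(x)·conj((P_m w(s,·))(x)) dx. -/
/-!
Pair the Galerkin equation with `conj w` and integrate over the circle, then take imaginary
parts. The dispersive term `L ∑ -(2πk/L)² |a_k|²` and the nonlinear term `∫ |w|⁴` are real
(`P_n` is self-adjoint and fixes `w`), so they drop out; for the same reason `P_n f` may be
replaced by `f`, and self-adjointness and idempotence of `P_m` turn the feedback term into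
`μ ‖P_m w‖² - μ ∫ v conj (P_m w)`. Finally, by Parseval `‖w‖² = L ∑ |a_k|²`, whose derivative is
`2 Re ∫ ∂ₛw conj w`.
-/

open MeasureTheory Finset

/-- A Galerkin solution of the feedback-controlled damped driven NLS:
`w(s,x) = ∑_{|k| ≤ n} a_k(s) e^{2πikx/L}` with differentiable coefficients on `[-k₀, ∞)`,
satisfying `i ∂ₛ w + ∂ₓ² w + P_n(|w|² w) + iγ w = P_n f - iμ (P_m w - v(s))`
with `w(-k₀, ·) = 0`, where the datum `v(s) = ∑_{|k| ≤ m} (vc k s) e^{2πikx/L}` is a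
continuously differentiable map into trigonometric polynomials of degree ≤ m with
finite `X`-norm `sup_s ‖v(s)‖ + sup_s ‖∂ₛ v(s)‖`. -/
structure GalerkinSolution (L : ℝ) [Fact (0 < L)] where
  /-- damping parameter -/
  γ : ℝ
  /-- feedback (relaxation) parameter -/
  μ : ℝ
  hγ : 0 < γ
  hμ : 0 < μ
  /-- number of observed low modes -/
  m : ℕ
  /-- Galerkin truncation level -/
  n : ℕ
  hmn : m ≤ n
  /-- the forcing term, in `L²(AddCircle L)` -/
  f : AddCircle L → ℂ
  hf : MeasureTheory.MemLp f 2 MeasureTheory.volume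
  /-- the initial time is `-k₀` -/
  k₀ : ℝ
  /-- the Fourier coefficients of the datum `v` -/
  vc : ℤ → ℝ → ℂ
  hvc : ∀ k : ℤ, ContDiff ℝ 1 (vc k)
  /-- `|v|_X < ∞` -/
  hvX : ∃ C : ℝ, ∀ s : ℝ,
    l2norm L (trigSum L m (fun k => vc k s))
      + l2norm L (trigSum L m (fun k => deriv (vc k) s)) ≤ C
  /-- the coefficients of the Galerkin solution -/
  a : ℤ → ℝ → ℂ
  /-- the time derivatives of the coefficients -/
  a' : ℤ → ℝ → ℂ
  ha : ∀ (k : ℤ) (s : ℝ), -k₀ ≤ s → HasDerivWithinAt (a k) (a' k s) (Set.Ici (-k₀)) s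
  hinit : ∀ k : ℤ, a k (-k₀) = 0
  heq : ∀ (s : ℝ), -k₀ ≤ s → ∀ x : AddCircle L,
    Complex.I * trigSum L n (fun k => a' k s) x
      + trigSum L n (fun k => Complex.ofReal (-((2 * Real.pi * (k : ℝ) / L) ^ 2)) * a k s) x
      + lowProj L n (fun y => Complex.ofReal (‖trigSum L n (fun k => a k s) y‖ ^ 2)
          * trigSum L n (fun k => a k s) y) x
      + Complex.I * (γ : ℂ) * trigSum L n (fun k => a k s) x
      = lowProj L n f x
        - Complex.I * (μ : ℂ) * (lowProj L m (trigSum L n (fun k => a k s)) x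
            - trigSum L m (fun k => vc k s) x)

namespace GalerkinSolution

variable {L : ℝ} [Fact (0 < L)]

/-- the solution `w(s, ·)` -/
noncomputable def w (G : GalerkinSolution L) (s : ℝ) : AddCircle L → ℂ :=
  trigSum L G.n (fun k => G.a k s)

/-- the time derivative `∂ₛ w(s, ·)` -/
noncomputable def ws (G : GalerkinSolution L) (s : ℝ) : AddCircle L → ℂ :=
  trigSum L G.n (fun k => G.a' k s)

/-- the spatial derivative `∂ₓ w(s, ·)` -/
noncomputable def wx (G : GalerkinSolution L) (s : ℝ) : AddCircle L → ℂ :=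
  trigSum L G.n (fun k => Complex.ofReal (2 * Real.pi * (k : ℝ) / L) * Complex.I * G.a k s)

/-- the second spatial derivative `∂ₓ² w(s, ·)` -/
noncomputable def wxx (G : GalerkinSolution L) (s : ℝ) : AddCircle L → ℂ :=
  trigSum L G.n (fun k => Complex.ofReal (-((2 * Real.pi * (k : ℝ) / L) ^ 2)) * G.a k s)

/-- the datum `v(s)` -/
noncomputable def v (G : GalerkinSolution L) (s : ℝ) : AddCircle L → ℂ :=
  trigSum L G.m (fun k => G.vc k s)

/-- the time derivative `∂ₛ v(s)` of the datum -/
noncomputable def vs (G : GalerkinSolution L) (s : ℝ) : AddCircle L → ℂ :=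
  trigSum L G.m (fun k => deriv (G.vc k) s)

/-- the norm `|v|_X = sup_s ‖v(s)‖ + sup_s ‖∂ₛ v(s)‖` of the datum -/
noncomputable def normX (G : GalerkinSolution L) : ℝ :=
  (⨆ s : ℝ, l2norm L (G.v s)) + ⨆ s : ℝ, l2norm L (G.vs s)

end GalerkinSolution

open ComplexConjugate

theorem Continuous.integrable_of_compactSpace {X E : Type*} [TopologicalSpace X] [CompactSpace X]
    [MeasurableSpace X] [OpensMeasurableSpace X] [NormedAddCommGroup E] {μ : Measure X}
    [IsFiniteMeasureOnCompacts μ] {g : X → E} (hg : Continuous g) : Integrable g μ :=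
  hg.integrable_of_hasCompactSupport (.of_compactSpace g)

section TrigonometricPolynomials

open AddCircle

variable {L : ℝ}

@[fun_prop]
theorem continuous_trigSum (N : ℕ) (c : ℤ → ℂ) : Continuous (trigSum L N c) :=
  continuous_finsetSum _ fun k _ => continuous_const.mul (map_continuous (fourier k))

variable [hL : Fact (0 < L)]

@[fun_prop]
theorem continuous_lowProj (N : ℕ) (g : AddCircle L → ℂ) : Continuous (lowProj L N g) :=
  continuous_trigSum N _

theorem fourierCoeff_trigSum (N : ℕ) (c : ℤ → ℂ) (j : ℤ) :
    fourierCoeff (trigSum L N c) j = if j ∈ Icc (-(N : ℤ)) N then c j else 0 := by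
  have hsum : trigSum L N c = ∑ k ∈ Icc (-(N : ℤ)) N, fun x => c k * fourier k x := by
    ext x
    simp only [trigSum, Finset.sum_apply]
  rw [hsum, fourierCoeff.sum (f := fun k x => c k * fourier k x) _ fun k _ =>
    (continuous_const.mul (map_continuous (fourier k))).integrable_of_compactSpace,
    Finset.sum_apply]
  simp_rw [fourierCoeff.const_mul, fourierCoeff_fourier, Pi.single_apply, mul_ite, mul_one,
    mul_zero, Finset.sum_ite_eq]

theorem lowProj_trigSum (N : ℕ) (c : ℤ → ℂ) : lowProj L N (trigSum L N c) = trigSum L N c := by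
  funext x
  unfold lowProj
  exact Finset.sum_congr rfl fun k hk => by simp only [fourierCoeff_trigSum, if_pos hk]

theorem lowProj_lowProj (N : ℕ) (g : AddCircle L → ℂ) :
    lowProj L N (lowProj L N g) = lowProj L N g :=
  lowProj_trigSum N _

theorem integral_eq_mul_integral_haarAddCircle (g : AddCircle L → ℂ) :
    ∫ x : AddCircle L, g x = L * ∫ x, g x ∂haarAddCircle := by
  rw [volume_eq_smul_haarAddCircle, integral_smul_measure, ENNReal.toReal_ofReal hL.out.le,
    Complex.real_smul]

theorem integrable_haarAddCircle_of_integrable {g : AddCircle L → ℂ} (hg : Integrable g) :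
    Integrable g haarAddCircle := by
  rw [volume_eq_smul_haarAddCircle] at hg
  exact (integrable_smul_measure (by simp [hL.out]) ENNReal.ofReal_ne_top).mp hg

theorem integral_mul_conj_trigSum {g : AddCircle L → ℂ} (hg : Integrable g) (N : ℕ)
    (c : ℤ → ℂ) :
    ∫ x, g x * conj (trigSum L N c x)
      = L * ∑ k ∈ Icc (-(N : ℤ)) N, conj (c k) * fourierCoeff g k := by
  have hexpand : ∀ x, g x * conj (trigSum L N c x)
      = ∑ k ∈ Icc (-(N : ℤ)) N, conj (c k) * (fourier (-k) x • g x) := fun x => by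
    simp only [trigSum, map_sum, map_mul, Finset.mul_sum, ← fourier_neg, smul_eq_mul]
    exact Finset.sum_congr rfl fun k _ => by ring
  simp_rw [hexpand]
  rw [integral_eq_mul_integral_haarAddCircle, integral_finsetSum _ fun k _ =>
    ((integrable_haarAddCircle_of_integrable hg).fourier_smul (-k)).const_mul _]
  simp_rw [integral_const_mul, fourierCoeff]

theorem integral_trigSum_mul_conj_trigSum (N : ℕ) (c d : ℤ → ℂ) :
    ∫ x, trigSum L N c x * conj (trigSum L N d x)
      = L * ∑ k ∈ Icc (-(N : ℤ)) N, c k * conj (d k) := by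
  rw [integral_mul_conj_trigSum (continuous_trigSum N c).integrable_of_compactSpace]
  refine congrArg _ (Finset.sum_congr rfl fun k hk => ?_)
  rw [fourierCoeff_trigSum, if_pos hk, mul_comm]

theorem integral_mul_conj_self (g : AddCircle L → ℂ) :
    ∫ x, g x * conj (g x) = (l2norm L g ^ 2 : ℝ) := by
  rw [l2norm, Real.sq_sqrt (integral_nonneg fun x => sq_nonneg _), ← integral_complex_ofReal]
  simp_rw [Complex.mul_conj', Complex.ofReal_pow]

theorem l2norm_sq_trigSum (N : ℕ) (c : ℤ → ℂ) :
    l2norm L (trigSum L N c) ^ 2 = L * ∑ k ∈ Icc (-(N : ℤ)) N, ‖c k‖ ^ 2 := by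
  rw [← Complex.ofReal_inj, ← integral_mul_conj_self, integral_trigSum_mul_conj_trigSum]
  push_cast
  simp_rw [Complex.mul_conj']

theorem integral_lowProj_mul_conj {g h : AddCircle L → ℂ} (hg : Integrable g) (hh : Integrable h)
    (N : ℕ) : ∫ x, lowProj L N g x * conj (h x) = ∫ x, g x * conj (lowProj L N h x) := by
  have hswap : ∫ x, lowProj L N g x * conj (h x) = conj (∫ x, h x * conj (lowProj L N g x)) := by
    rw [← integral_conj]
    simp only [map_mul, Complex.conj_conj, mul_comm]
  rw [hswap, lowProj, lowProj, integral_mul_conj_trigSum hh, integral_mul_conj_trigSum hg]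
  simp only [map_mul, map_sum, Complex.conj_conj, Complex.conj_ofReal, mul_comm]

theorem im_integral_trigSum_ofReal_mul_mul_conj (N : ℕ) (r : ℤ → ℝ) (c : ℤ → ℂ) :
    (∫ x, trigSum L N (fun k => r k * c k) x * conj (trigSum L N c x)).im = 0 := by
  have hreal : ∀ k, (r k : ℂ) * c k * conj (c k) = (r k * ‖c k‖ ^ 2 : ℝ) := fun k => by
    rw [mul_assoc, Complex.mul_conj']
    push_cast
    rfl
  simp only [integral_trigSum_mul_conj_trigSum, hreal, ← Complex.ofReal_sum,
    ← Complex.ofReal_mul, Complex.ofReal_im]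

theorem im_integral_lowProj_cubic_mul_conj (N : ℕ) (c : ℤ → ℂ) :
    (∫ x, lowProj L N (fun y => Complex.ofReal (‖trigSum L N c y‖ ^ 2) * trigSum L N c y) x
      * conj (trigSum L N c x)).im = 0 := by
  have hw := continuous_trigSum (L := L) N c
  have hcubic : Continuous fun y => Complex.ofReal (‖trigSum L N c y‖ ^ 2) * trigSum L N c y := by
    fun_prop
  rw [integral_lowProj_mul_conj hcubic.integrable_of_compactSpace hw.integrable_of_compactSpace,
    lowProj_trigSum]
  have hreal : ∀ x, Complex.ofReal (‖trigSum L N c x‖ ^ 2) * trigSum L N c x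
      * conj (trigSum L N c x) = (‖trigSum L N c x‖ ^ 2 * ‖trigSum L N c x‖ ^ 2 : ℝ) :=
    fun x => by
      rw [mul_assoc, Complex.mul_conj']
      push_cast
      rfl
  simp only [hreal, integral_complex_ofReal, Complex.ofReal_im]

theorem hasDerivWithinAt_l2norm_sq_trigSum (N : ℕ) {c : ℤ → ℝ → ℂ} {c' : ℤ → ℂ} {s : Set ℝ}
    {t : ℝ} (hc : ∀ k, HasDerivWithinAt (c k) (c' k) s t) :
    HasDerivWithinAt (fun σ => l2norm L (trigSum L N fun k => c k σ) ^ 2)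
      (2 * (∫ x, trigSum L N c' x * conj (trigSum L N (fun k => c k t) x)).re) s t := by
  simp_rw [l2norm_sq_trigSum, integral_trigSum_mul_conj_trigSum]
  refine ((HasDerivWithinAt.fun_sum fun k _ => (hc k).norm_sq).const_mul L).congr_deriv ?_
  simp_rw [Complex.inner, Complex.re_ofReal_mul, Complex.re_sum, Finset.mul_sum]
  ring_nf

end TrigonometricPolynomials

namespace GalerkinSolution

open Complex

variable {L : ℝ} [Fact (0 < L)] (G : GalerkinSolution L) {s : ℝ}

theorem equation (hs : -G.k₀ ≤ s) (x : AddCircle L) :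
    I * G.ws s x + G.wxx s x + lowProj L G.n (fun y => ofReal (‖G.w s y‖ ^ 2) * G.w s y) x
      + I * G.γ * G.w s x
    = lowProj L G.n G.f x - I * G.μ * (lowProj L G.m (G.w s) x - G.v s x) :=
  G.heq s hs x

theorem integral_equation_mul_conj_w (hs : -G.k₀ ≤ s) :
    I * (∫ x, G.ws s x * conj (G.w s x)) + (∫ x, G.wxx s x * conj (G.w s x))
      + (∫ x, lowProj L G.n (fun y => ofReal (‖G.w s y‖ ^ 2) * G.w s y) x * conj (G.w s x))
      + I * G.γ * (∫ x, G.w s x * conj (G.w s x))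
    = (∫ x, lowProj L G.n G.f x * conj (G.w s x))
      - I * G.μ * ((∫ x, lowProj L G.m (G.w s) x * conj (G.w s x))
        - ∫ x, G.v s x * conj (G.w s x)) := by
  have h := integral_congr_ae (μ := volume)
    (ae_of_all _ fun x => congrArg (· * conj (G.w s x)) (G.equation hs x))
  simp only [add_mul, sub_mul, mul_assoc I, mul_assoc (G.γ : ℂ), mul_assoc (G.μ : ℂ)] at h
  rw [integral_add, integral_add, integral_add, integral_sub, integral_const_mul,
    integral_const_mul, integral_const_mul, integral_const_mul, integral_const_mul,
    integral_sub] at h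
  · linear_combination h
  all_goals
    refine Continuous.integrable_of_compactSpace ?_
    simp only [ws, w, wxx, v]
    fun_prop

theorem re_integral_ws_mul_conj_w (hs : -G.k₀ ≤ s) :
    (∫ x, G.ws s x * conj (G.w s x)).re
      = (∫ x, G.f x * conj (G.w s x)).im
        + G.μ * (∫ x, G.v s x * conj (lowProj L G.m (G.w s) x)).re
        - G.γ * l2norm L (G.w s) ^ 2 - G.μ * l2norm L (lowProj L G.m (G.w s)) ^ 2 := by
  have hw : Integrable (G.w s) := (continuous_trigSum _ _).integrable_of_compactSpace
  have hPw : Integrable (lowProj L G.m (G.w s)) :=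
    (continuous_lowProj _ _).integrable_of_compactSpace
  have hv : Integrable (G.v s) := (continuous_trigSum _ _).integrable_of_compactSpace
  have hforcing : ∫ x, lowProj L G.n G.f x * conj (G.w s x) = ∫ x, G.f x * conj (G.w s x) := by
    rw [integral_lowProj_mul_conj (G.hf.integrable one_le_two) hw, w, lowProj_trigSum]
  have hfeedback : ∫ x, lowProj L G.m (G.w s) x * conj (G.w s x)
      = (l2norm L (lowProj L G.m (G.w s)) ^ 2 : ℝ) := by
    conv_lhs => rw [← lowProj_lowProj]
    rw [integral_lowProj_mul_conj hPw hw, integral_mul_conj_self]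
  have hdatum : ∫ x, G.v s x * conj (G.w s x)
      = ∫ x, G.v s x * conj (lowProj L G.m (G.w s) x) := by
    have hPv : lowProj L G.m (G.v s) = G.v s := lowProj_trigSum _ _
    rw [← integral_lowProj_mul_conj hv hw, hPv]
  have hdispersion : (∫ x, G.wxx s x * conj (G.w s x)).im = 0 :=
    im_integral_trigSum_ofReal_mul_mul_conj _ _ _
  have hcubic : (∫ x, lowProj L G.n (fun y => ofReal (‖G.w s y‖ ^ 2) * G.w s y) x
      * conj (G.w s x)).im = 0 :=
    im_integral_lowProj_cubic_mul_conj _ _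
  have h := congrArg im (G.integral_equation_mul_conj_w hs)
  rw [hforcing, hfeedback, hdatum, integral_mul_conj_self] at h
  simp only [add_im, sub_im, mul_im, mul_re, sub_re, I_re, I_im, ofReal_re, ofReal_im,
    hdispersion, hcubic] at h
  linear_combination h

end GalerkinSolution

/-- for a Galerkin solution `w` and every `s ≥ -k₀`,
`(1/2) (d/ds)‖w(s)‖² + γ‖w(s)‖² + μ‖P_m w(s)‖²
  = Im ∫ f · conj w(s) + μ Re ∫ v(s) · conj (P_m w(s))`;
equivalently, `s ↦ ‖w(s)‖²` has (one-sided) derivative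
`2 (Im ∫ f conj w + μ Re ∫ v conj (P_m w) - γ‖w‖² - μ‖P_m w‖²)` within `[-k₀, ∞)`. -/
theorem galerkin_energy_identity (L : ℝ) [Fact (0 < L)] (G : GalerkinSolution L)
    (s : ℝ) (hs : -G.k₀ ≤ s) :
    HasDerivWithinAt (fun σ : ℝ => (l2norm L (G.w σ)) ^ 2)
      (2 * ((∫ x : AddCircle L, G.f x * (starRingEnd ℂ) (G.w s x)).im
        + G.μ * (∫ x : AddCircle L, G.v s x * (starRingEnd ℂ) (lowProj L G.m (G.w s) x)).re
        - G.γ * (l2norm L (G.w s)) ^ 2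
        - G.μ * (l2norm L (lowProj L G.m (G.w s))) ^ 2))
      (Set.Ici (-G.k₀)) s := by
  rw [← G.re_integral_ws_mul_conj_w hs]
  exact hasDerivWithinAt_l2norm_sq_trigSum G.n fun k => G.ha k s hs
end
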